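/- Scalar solution set. Let H, F, N, r₀ be real numbers with H ≠ 0, r₀ > 0, F² < 1, and r₀(F−1)/2 ≤ HN ≤ r₀(F+1)/2. Then δ ≥ 0 and the scalar solution set 𝒫 = {P ∈ ℝ : P ≥ 0, (1−F²)P ≥ 0, r₀ − H²P ≥ 0, Ξ(P) ≥ 0} equals the closed interval [P₁, P₂]. -/
import Mathlib


/-- The concave quadratic `Ξ(P) = -H²P² + (r₀(1-F²) + 2HFN)P - N²`. -/
def Xi (H F N r0 P : ℝ) : ℝ :=
  -H ^ 2 * P ^ 2 + (r0 * (1 - F ^ 2) + 2 * H * F * N) * P - N ^ 2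

/-- The discriminant quantity
`δ = (1-F²)(r₀(1+F) - 2HN)(r₀(1-F) + 2HN)`. -/
def srDelta (H F N r0 : ℝ) : ℝ :=
  (1 - F ^ 2) * (r0 * (1 + F) - 2 * H * N) * (r0 * (1 - F) + 2 * H * N)

/-- The smaller root `P₁` of `Ξ`. -/
noncomputable def srP1 (H F N r0 : ℝ) : ℝ :=
  ((2 * H * F * N + r0 * (1 - F ^ 2)) - Real.sqrt (srDelta H F N r0)) /
    (2 * H ^ 2)

/-- The larger root `P₂` of `Ξ`. -/
noncomputable def srP2 (H F N r0 : ℝ) : ℝ :=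
  ((2 * H * F * N + r0 * (1 - F ^ 2)) + Real.sqrt (srDelta H F N r0)) /
    (2 * H ^ 2)

/-- **scalar solution set.** Under `H ≠ 0`, `r₀ > 0`, `F² < 1`
and `r₀(F-1)/2 ≤ HN ≤ r₀(F+1)/2`, one has `δ ≥ 0` and the scalar solution set
equals `[P₁, P₂]`. -/
theorem stmt_14 (H F N r0 : ℝ) (hH : H ≠ 0) (hr0 : 0 < r0) (hF : F ^ 2 < 1)
    (hlo : r0 * (F - 1) / 2 ≤ H * N) (hhi : H * N ≤ r0 * (F + 1) / 2) :
    0 ≤ srDelta H F N r0 ∧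
    {P : ℝ | 0 ≤ P ∧ 0 ≤ (1 - F ^ 2) * P ∧ 0 ≤ r0 - H ^ 2 * P ∧
        0 ≤ Xi H F N r0 P} =
      Set.Icc (srP1 H F N r0) (srP2 H F N r0) := by
  have hH2 : 0 < H ^ 2 := by positivity
  have hF1 : 0 < 1 - F := by nlinarith [sq_nonneg (F - 1)]
  have hF2 : 0 < 1 + F := by nlinarith [sq_nonneg (F + 1)]
  have hFsq : 0 < 1 - F ^ 2 := by nlinarith
  have hd : 0 ≤ srDelta H F N r0 := by
    unfold srDelta
    apply mul_nonneg (mul_nonneg (by linarith) (by linarith)) (by linarith)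
  set B : ℝ := 2 * H * F * N + r0 * (1 - F ^ 2) with hBdef
  set s : ℝ := Real.sqrt (srDelta H F N r0) with hsdef
  have hs0 : 0 ≤ s := Real.sqrt_nonneg _
  have hs2 : s ^ 2 = srDelta H F N r0 := Real.sq_sqrt hd
  have hdB : srDelta H F N r0 = B ^ 2 - 4 * H ^ 2 * N ^ 2 := by
    unfold srDelta; rw [hBdef]; ring
  -- B ≥ 0
  have hB : 0 ≤ B := by
    rcases le_or_gt 0 F with hFpos | hFneg
    · nlinarith [mul_le_mul_of_nonneg_left hlo hFpos]
    · nlinarith [mul_le_mul_of_nonpos_left hhi (le_of_lt hFneg)]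
  -- B ≤ 2 r0
  have hC : B ≤ 2 * r0 := by
    rcases le_or_gt 0 F with hFpos | hFneg
    · nlinarith [mul_le_mul_of_nonneg_left hhi hFpos]
    · nlinarith [mul_le_mul_of_nonpos_left hlo (le_of_lt hFneg)]
  -- s ≤ B
  have hsB : s ≤ B := by
    have h1 : srDelta H F N r0 ≤ B ^ 2 := by nlinarith [sq_nonneg (H * N)]
    calc s ≤ Real.sqrt (B ^ 2) := Real.sqrt_le_sqrt h1
      _ = B := by rw [Real.sqrt_sq hB]
  -- s ≤ 2 r0 - B
  have hsC : s ≤ 2 * r0 - B := by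
    have h1 : srDelta H F N r0 ≤ (2 * r0 - B) ^ 2 := by
      nlinarith [sq_nonneg (r0 * F - H * N)]
    calc s ≤ Real.sqrt ((2 * r0 - B) ^ 2) := Real.sqrt_le_sqrt h1
      _ = 2 * r0 - B := Real.sqrt_sq (by linarith)
  refine ⟨hd, ?_⟩
  ext P
  simp only [Set.mem_setOf_eq, Set.mem_Icc, srP1, srP2, ← hBdef, ← hsdef]
  have h2H2 : (0:ℝ) < 2 * H ^ 2 := by linarith
  rw [div_le_iff₀ h2H2, le_div_iff₀ h2H2]
  have hXiKey : 4 * H ^ 2 * Xi H F N r0 P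
      = s ^ 2 - (2 * H ^ 2 * P - B) ^ 2 := by
    rw [hs2, hdB]; unfold Xi; rw [hBdef]; ring
  constructor
  · rintro ⟨hP0, _, hR, hXi⟩
    have h4 : 0 ≤ 4 * H ^ 2 * Xi H F N r0 P :=
      mul_nonneg (by positivity) hXi
    have hx2 : (2 * H ^ 2 * P - B) ^ 2 ≤ s ^ 2 := by linarith
    have habs : |2 * H ^ 2 * P - B| ≤ s := by
      have h := Real.sqrt_le_sqrt hx2
      rwa [Real.sqrt_sq_eq_abs, Real.sqrt_sq hs0] at h
    obtain ⟨ha, hb⟩ := abs_le.mp habs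
    constructor <;> linarith
  · rintro ⟨h1, h2⟩
    have hx2 : (2 * H ^ 2 * P - B) ^ 2 ≤ s ^ 2 := by
      have : |2 * H ^ 2 * P - B| ≤ s := abs_le.mpr ⟨by linarith, by linarith⟩
      calc (2 * H ^ 2 * P - B) ^ 2 = |2 * H ^ 2 * P - B| ^ 2 := (sq_abs _).symm
        _ ≤ s ^ 2 := pow_le_pow_left₀ (abs_nonneg _) this 2
    have hP0 : 0 ≤ P := by nlinarith
    have hR : 0 ≤ r0 - H ^ 2 * P := by linarith
    have h5 : 0 ≤ 4 * H ^ 2 * Xi H F N r0 P := by linarith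
    have hXi : 0 ≤ Xi H F N r0 P :=
      le_of_mul_le_mul_left (by simpa using h5)
        (show (0:ℝ) < 4 * H ^ 2 by positivity)
    exact ⟨hP0, mul_nonneg (le_of_lt hFsq) hP0, hR, hXi⟩
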